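/- If a game Γ with continuous pseudo-gradient F is weighted strictly monotone with weights w_1,…,w_N, then Γ has exactly one equilibrium x̄ ∈ Δ. -/

import Mathlib

/-
STATEMENT 17: If a game Γ with continuous pseudo-gradient F is weighted strictly
monotone with weights w_1,…,w_N, then Γ has exactly one equilibrium x̄ ∈ Δ.
-/

open Filter Topology

noncomputable section

/-- Joint strategy space. -/
abbrev Strat {N : ℕ} (n : Fin N → ℕ) := ∀ k, Fin (n k) → ℝ

/-- `x` lies in `Δ = Δ₁ × ⋯ × Δ_N`. -/
def JointSimplex {N : ℕ} {n : Fin N → ℕ} (x : Strat n) : Prop :=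
  ∀ k, x k ∈ stdSimplex ℝ (Fin (n k))

/-- `xbar` is an equilibrium: `⟨x_k, r_k(x̄)⟩ ≤ ⟨x̄_k, r_k(x̄)⟩` for all `k` and
all `x_k ∈ Δ_k`. -/
def IsEquilibrium {N : ℕ} {n : Fin N → ℕ} (r : Strat n → Strat n) (xbar : Strat n) : Prop :=
  JointSimplex xbar ∧
    ∀ k, ∀ zk ∈ stdSimplex ℝ (Fin (n k)),
      ∑ i, zk i * r xbar k i ≤ ∑ i, xbar k i * r xbar k i

/-!
The weighted pseudo-gradient `F(·; w)` is a strictly monotone operator on the compact convex set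
`Δ`, and equilibria are exactly the solutions of the variational inequality
`⟨y - x, F(x; w)⟩ ≥ 0` for all `y ∈ Δ`. By Minty's argument, for a monotone operator the closed
sets `{x ∈ Δ | ⟨y - x, F(y; w)⟩ ≥ 0}` have the finite intersection property (for finitely many
`y`, this comes from Sion's minimax theorem), so compactness gives a point in all of them;
continuity of `F` along segments turns it into a solution of the variational inequality. Two
solutions `x ≠ x'` would give `⟨x - x', F(x; w) - F(x'; w)⟩ ≤ 0`, contradicting strict
monotonicity.
-/

section VariationalInequality

variable {E : Type*} [TopologicalSpace E] [AddCommGroup E] [Module ℝ E]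

def IsMonotoneOperatorOn (K : Set E) (F : E → StrongDual ℝ E) : Prop :=
  ∀ x ∈ K, ∀ y ∈ K, 0 ≤ (F x - F y) (x - y)

def IsStrictMonotoneOperatorOn (K : Set E) (F : E → StrongDual ℝ E) : Prop :=
  ∀ x ∈ K, ∀ y ∈ K, x ≠ y → 0 < (F x - F y) (x - y)

def SolvesVI (K : Set E) (F : E → StrongDual ℝ E) (x : E) : Prop :=
  x ∈ K ∧ ∀ y ∈ K, 0 ≤ F x (y - x)

def SolvesMintyVI (K : Set E) (F : E → StrongDual ℝ E) (x : E) : Prop :=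
  x ∈ K ∧ ∀ y ∈ K, 0 ≤ F y (y - x)

variable {K : Set E} {F : E → StrongDual ℝ E}

theorem IsStrictMonotoneOperatorOn.isMonotoneOperatorOn (hF : IsStrictMonotoneOperatorOn K F) :
    IsMonotoneOperatorOn K F := by
  intro x hx y hy
  rcases eq_or_ne x y with rfl | hxy
  · simp
  · exact (hF x hx y hy hxy).le

theorem IsMonotoneOperatorOn.sum_mul_mul_apply_sub_nonpos (hF : IsMonotoneOperatorOn K F)
    {ι : Type*} [Fintype ι] {y : ι → E} (hy : ∀ i, y i ∈ K) {μ : ι → ℝ} (hμ : ∀ i, 0 ≤ μ i) :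
    ∑ i, ∑ j, μ i * μ j * F (y i) (y j - y i) ≤ 0 := by
  have hswap : ∑ i, ∑ j, μ i * μ j * F (y i) (y j - y i) =
      ∑ i, ∑ j, μ i * μ j * F (y j) (y i - y j) := by
    rw [Finset.sum_comm]
    simp only [mul_comm (μ _) (μ _)]
  have hpair (i j : ι) :
      F (y i) (y j - y i) + F (y j) (y i - y j) = -(F (y j) - F (y i)) (y j - y i) := by
    rw [← neg_sub (y j) (y i), map_neg, sub_apply]
    ring
  have hsum : ∑ i, ∑ j, μ i * μ j * (F (y i) (y j - y i) + F (y j) (y i - y j)) ≤ 0 :=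
    Finset.sum_nonpos fun i _ => Finset.sum_nonpos fun j _ => by
      rw [hpair]
      exact mul_nonpos_of_nonneg_of_nonpos (mul_nonneg (hμ i) (hμ j))
        (neg_nonpos.mpr (hF _ (hy j) _ (hy i)))
  simp only [mul_add, Finset.sum_add_distrib, ← hswap] at hsum
  linarith

theorem IsMonotoneOperatorOn.sum_mul_apply_sum_smul_sub_nonpos (hF : IsMonotoneOperatorOn K F)
    {ι : Type*} [Fintype ι] {y : ι → E} (hy : ∀ i, y i ∈ K) {μ : ι → ℝ}
    (hμ : μ ∈ stdSimplex ℝ ι) :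
    ∑ i, μ i * F (y i) (∑ j, μ j • y j - y i) ≤ 0 := by
  have hcomb (i : ι) : ∑ j, μ j • y j - y i = ∑ j, μ j • (y j - y i) := by
    simp only [smul_sub, Finset.sum_sub_distrib, ← Finset.sum_smul, hμ.2, one_smul]
  simp only [hcomb, map_sum, map_smul, smul_eq_mul, Finset.mul_sum, ← mul_assoc]
  exact hF.sum_mul_mul_apply_sub_nonpos hy hμ.1

theorem IsStrictMonotoneOperatorOn.eq_of_solvesVI (hF : IsStrictMonotoneOperatorOn K F)
    {x y : E} (hx : SolvesVI K F x) (hy : SolvesVI K F y) : x = y := by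
  by_contra hxy
  have hstrict := hF x hx.1 y hy.1 hxy
  have hxy' := hx.2 y hy.1
  rw [← neg_sub, map_neg] at hxy'
  rw [sub_apply] at hstrict
  linarith [hy.2 x hx.1]

variable [IsTopologicalAddGroup E] [ContinuousSMul ℝ E]

theorem IsMonotoneOperatorOn.exists_forall_apply_sub_nonneg (hF : IsMonotoneOperatorOn K F)
    (hne : K.Nonempty) (hc : Convex ℝ K) (hK : IsCompact K)
    {ι : Type*} [Fintype ι] (y : ι → E) (hy : ∀ i, y i ∈ K) :
    ∃ x ∈ K, ∀ i, 0 ≤ F (y i) (y i - x) := by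
  rcases isEmpty_or_nonempty ι with _ | _
  · obtain ⟨x, hx⟩ := hne
    exact ⟨x, hx, fun i => isEmptyElim i⟩
  classical
  set f : E → (ι → ℝ) → ℝ := fun x μ => ∑ i, μ i * F (y i) (x - y i) with hf
  have hf_left (μ : ι → ℝ) :
      (fun x => f x μ) = fun x => (∑ i, μ i • F (y i)) x - ∑ i, μ i * F (y i) (y i) := by
    ext x
    simp [hf, map_sub, mul_sub, Finset.sum_sub_distrib]
  have hf_right (x : E) :
      (fun μ => f x μ) = Fintype.linearCombination ℝ (fun i => F (y i) (x - y i)) := by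
    ext μ
    simp [hf, Fintype.linearCombination_apply]
  -- a saddle point `(a, b)` of `f` on `K × Δ_ι`; at the barycenter `∑ b j • y j` the value of
  -- `f · b` is `≤ 0` by monotonicity, hence so is `f a μ` for every vertex `μ`.
  obtain ⟨a, ha, b, hb, hab⟩ := Sion.exists_isSaddlePointOn (f := f) hne hc hK
    (fun μ _ => by
      rw [hf_left]
      exact (Continuous.continuousOn (by fun_prop)).lowerSemicontinuousOn)
    (fun μ _ => by
      rw [hf_left]
      exact ((LinearMap.convexOn (∑ i, μ i • F (y i) : StrongDual ℝ E).toLinearMap hc).sub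
        (concaveOn_const _ hc)).quasiconvexOn)
    (convex_stdSimplex ℝ ι) ⟨_, single_mem_stdSimplex ℝ (Classical.arbitrary ι)⟩
    (isCompact_stdSimplex ℝ ι)
    (fun x _ => by
      rw [hf_right]
      exact (LinearMap.continuous_of_finiteDimensional _).continuousOn.upperSemicontinuousOn)
    (fun x _ => by
      rw [hf_right]
      exact (LinearMap.concaveOn _ (convex_stdSimplex ℝ ι)).quasiconcaveOn)
  have hbary : ∑ j, b j • y j ∈ K := hc.sum_mem (fun j _ => hb.1 j) hb.2 (fun j _ => hy j)
  have hval : f (∑ j, b j • y j) b ≤ 0 := hF.sum_mul_apply_sum_smul_sub_nonpos hy hb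
  refine ⟨a, ha, fun i => ?_⟩
  have hvertex := (hab _ hbary _ (single_mem_stdSimplex ℝ i)).trans hval
  simp only [hf, Pi.single_apply, ite_mul, one_mul, zero_mul, Finset.sum_ite_eq',
    Finset.mem_univ, if_true] at hvertex
  rw [← neg_sub, map_neg]
  linarith

theorem IsMonotoneOperatorOn.exists_solvesMintyVI (hF : IsMonotoneOperatorOn K F)
    (hne : K.Nonempty) (hc : Convex ℝ K) (hK : IsCompact K) : ∃ x, SolvesMintyVI K F x := by
  have hclosed (y : K) : IsClosed {x | 0 ≤ F y (y - x)} :=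
    isClosed_le continuous_const (by fun_prop)
  obtain ⟨x, hxK, hx⟩ := hK.inter_iInter_nonempty _ hclosed fun u => by
    obtain ⟨x, hxK, hx⟩ :=
      hF.exists_forall_apply_sub_nonneg hne hc hK (fun i : u => (i : K).1) fun i => i.1.2
    exact ⟨x, hxK, Set.mem_iInter₂.mpr fun y hy => hx ⟨y, hy⟩⟩
  exact ⟨x, hxK, fun y hy => Set.mem_iInter.mp hx ⟨y, hy⟩⟩

theorem SolvesMintyVI.solvesVI {x : E} (hx : SolvesMintyVI K F x) (hc : Convex ℝ K)
    (hcont : ∀ v, ContinuousOn (fun z => F z v) K) : SolvesVI K F x := by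
  refine ⟨hx.1, fun y hy => ?_⟩
  set g : ℝ → ℝ := fun t => F (x + t • (y - x)) (y - x) with hg
  have hseg : Set.MapsTo (fun t : ℝ => x + t • (y - x)) (Set.Icc 0 1) K :=
    fun t ht => hc.add_smul_sub_mem hx.1 hy ht
  have hgcont : ContinuousOn g (Set.Icc 0 1) := (hcont (y - x)).comp (by fun_prop) hseg
  have hgpos : Set.Ioc (0 : ℝ) 1 ⊆ Set.Icc 0 1 ∩ g ⁻¹' Set.Ici 0 := fun t ht => by
    refine ⟨Set.Ioc_subset_Icc_self ht, ?_⟩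
    have hminty := hx.2 _ (hseg (Set.Ioc_subset_Icc_self ht))
    rw [add_sub_cancel_left, map_smul, smul_eq_mul] at hminty
    exact (mul_nonneg_iff_of_pos_left ht.1).mp hminty
  have hzero : (0 : ℝ) ∈ closure (Set.Ioc 0 1) := by
    rw [closure_Ioc zero_ne_one]
    exact Set.left_mem_Icc.2 zero_le_one
  have hg0 := (hgcont.preimage_isClosed_of_isClosed isClosed_Icc isClosed_Ici).closure_subset_iff.2
    hgpos hzero
  simpa [hg] using hg0.2

theorem IsStrictMonotoneOperatorOn.existsUnique_solvesVI (hF : IsStrictMonotoneOperatorOn K F)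
    (hne : K.Nonempty) (hc : Convex ℝ K) (hK : IsCompact K)
    (hcont : ∀ v, ContinuousOn (fun z => F z v) K) : ∃! x, SolvesVI K F x := by
  obtain ⟨x, hx⟩ := hF.isMonotoneOperatorOn.exists_solvesMintyVI hne hc hK
  exact ⟨x, hx.solvesVI hc hcont, fun y hy => hF.eq_of_solvesVI hy (hx.solvesVI hc hcont)⟩

end VariationalInequality

section Game

variable {N : ℕ} {n : Fin N → ℕ}

theorem setOf_jointSimplex_eq_pi :
    {z : Strat n | JointSimplex z} = Set.univ.pi fun k => stdSimplex ℝ (Fin (n k)) := by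
  ext z
  simp [JointSimplex]

theorem isCompact_setOf_jointSimplex : IsCompact {z : Strat n | JointSimplex z} := by
  rw [setOf_jointSimplex_eq_pi]
  exact isCompact_univ_pi fun k => isCompact_stdSimplex ℝ _

theorem convex_setOf_jointSimplex : Convex ℝ {z : Strat n | JointSimplex z} := by
  rw [setOf_jointSimplex_eq_pi]
  exact convex_pi fun _ _ => convex_stdSimplex ℝ _

theorem nonempty_setOf_jointSimplex (hn : ∀ k, 0 < n k) :
    {z : Strat n | JointSimplex z}.Nonempty :=
  ⟨fun k => Pi.single ⟨0, hn k⟩ 1, fun _ => single_mem_stdSimplex ℝ _⟩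

/-- `F(x; w)`, as the functional `v ↦ ⟨v, F(x; w)⟩`. -/
def weightedPseudoGradient (r : Strat n → Strat n) (w : Fin N → ℝ) (x : Strat n) :
    StrongDual ℝ (Strat n) :=
  ∑ k, w k • ∑ i, (-r x k i) • (ContinuousLinearMap.proj i).comp
    (ContinuousLinearMap.proj (R := ℝ) (φ := fun k => Fin (n k) → ℝ) k)

@[simp]
theorem weightedPseudoGradient_apply (r : Strat n → Strat n) (w : Fin N → ℝ) (x v : Strat n) :
    weightedPseudoGradient r w x v = ∑ k, w k * ∑ i, v k i * -r x k i := by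
  simp [weightedPseudoGradient, mul_comm]

theorem continuousOn_weightedPseudoGradient_apply {r : Strat n → Strat n}
    (hr : ContinuousOn r {z | JointSimplex z}) (w : Fin N → ℝ) (v : Strat n) :
    ContinuousOn (fun x => weightedPseudoGradient r w x v) {z | JointSimplex z} := by
  simp only [weightedPseudoGradient_apply]
  fun_prop

theorem weightedPseudoGradient_sub_apply (r : Strat n → Strat n) (w : Fin N → ℝ)
    (x y v : Strat n) :
    (weightedPseudoGradient r w x - weightedPseudoGradient r w y) v =
      ∑ k, w k * ∑ i, v k i * (-r x k i - -r y k i) := by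
  simp only [sub_apply, weightedPseudoGradient_apply, ← Finset.sum_sub_distrib, ← mul_sub]

theorem weightedPseudoGradient_apply_sub (r : Strat n → Strat n) (w : Fin N → ℝ)
    (x y : Strat n) :
    weightedPseudoGradient r w x (y - x) =
      ∑ k, w k * (∑ i, x k i * r x k i - ∑ i, y k i * r x k i) := by
  simp only [weightedPseudoGradient_apply, Pi.sub_apply, ← Finset.sum_sub_distrib]
  congr! 3
  ring

theorem isEquilibrium_iff_solvesVI {r : Strat n → Strat n} {w : Fin N → ℝ} (hw : ∀ k, 0 < w k)
    {x : Strat n} :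
    IsEquilibrium r x ↔ SolvesVI {z | JointSimplex z} (weightedPseudoGradient r w) x := by
  simp only [SolvesVI, Set.mem_ofPred_eq, weightedPseudoGradient_apply_sub]
  refine ⟨fun h => ⟨h.1, fun y hy => Finset.sum_nonneg fun k _ =>
    mul_nonneg (hw k).le (sub_nonneg.2 (h.2 k (y k) (hy k)))⟩, fun h => ⟨h.1, fun k zk hzk => ?_⟩⟩
  have hupdate : JointSimplex (Function.update x k zk) := by
    intro j
    rcases eq_or_ne j k with rfl | hj
    · simpa using hzk
    · simpa [hj] using h.1 j
  have hdev := h.2 _ hupdate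
  rw [Finset.sum_eq_single k (fun j _ hj => by simp [hj]) (by simp)] at hdev
  simp only [Function.update_self] at hdev
  exact sub_nonneg.1 ((mul_nonneg_iff_of_pos_left (hw k)).1 hdev)

end Game

theorem weighted_strictly_monotone_game_has_unique_equilibrium
    {N : ℕ} {n : Fin N → ℕ} (hn : ∀ k, 0 < n k)
    (r : Strat n → Strat n)
    -- the pseudo-gradient F = (−r_k)_k is continuous on Δ
    (hr : ContinuousOn r {z | JointSimplex z})
    -- Γ is weighted strictly monotone with weights w
    (w : Fin N → ℝ) (hw : ∀ k, 0 < w k)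
    (hmono : ∀ x y : Strat n, JointSimplex x → JointSimplex y → x ≠ y →
      0 < ∑ k, w k * ∑ i, (x k i - y k i) * ((- r x k i) - (- r y k i))) :
    ∃! xbar : Strat n, IsEquilibrium r xbar := by
  have hF : IsStrictMonotoneOperatorOn {z | JointSimplex z} (weightedPseudoGradient r w) :=
    fun x hx y hy hxy => by
      rw [weightedPseudoGradient_sub_apply]
      exact hmono x y hx hy hxy
  simpa only [isEquilibrium_iff_solvesVI hw] using
    hF.existsUnique_solvesVI (nonempty_setOf_jointSimplex hn) convex_setOf_jointSimplex
      isCompact_setOf_jointSimplex (continuousOn_weightedPseudoGradient_apply hr w)
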